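/- arXiv:1701.08274 — 2 statements merged into one kernel-verified Lean document; each statement's English description precedes it below -/
import Mathlib

section
/- Let A be an N×s complex matrix and B an N×t complex matrix with A*A = I_s and B*B = I_t. Put U_B = 2·B·B* − I_N and U_A = 2·A·A* − I_N, and U = U_B·U_A. Then for every complex number u with u ≠ 1 and u ≠ −1, det(I_N − u·U) = (1−u)^(N−(s+t)) · (1+u)^(t−s) · det((1+u)²·I_s − 4u·(A*·B)·(B*·A)), where the exponents N−(s+t) and t−s are integers (possibly negative). -/
/-!
Since `U_A` is an involution, `I - u U_B U_A = (U_A - u U_B) U_A`, and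
`U_A - u U_B = S + 2 A A*` with `S = (u - 1) I - 2u B B*`. As `S` is a combination of `I` and the
projection `B B*`, so is `S⁻¹`, and the matrix determinant lemma gives
`det (S + 2 A A*) = det S · det (I_s + 2 A* S⁻¹ A)`, where
`(u - 1)(u + 1) (I_s + 2 A* S⁻¹ A) = (1 + u)² I_s - 4u A* B B* A`. All remaining determinants are
of the form `det (a I + b X Y)` with `Y X = I_r`, which equals `a ^ (N - r) (a + b) ^ r` by the
Weinstein–Aronszajn identity.
-/

open Matrix

theorem Matrix.isIdempotentElem_mul_of_mul_eq_one {R m n : Type*} [Semiring R] [Fintype m]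
    [Fintype n] [DecidableEq n] {A : Matrix m n R} {B : Matrix n m R} (h : B * A = 1) :
    IsIdempotentElem (A * B) := by
  rw [IsIdempotentElem, Matrix.mul_assoc, ← Matrix.mul_assoc B, h, Matrix.one_mul]

theorem IsIdempotentElem.smul_one_add_smul_mul_smul_one_add_smul {K R : Type*} [CommSemiring K]
    [Semiring R] [Algebra K R] {P : R} (hP : IsIdempotentElem P) (a b c d : K) :
    (a • 1 + b • P) * (c • 1 + d • P) = (a * c) • 1 + (a * d + b * c + b * d) • P := by
  simp only [add_mul, mul_add, smul_mul_smul, one_mul, mul_one, hP.eq]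
  module

theorem IsIdempotentElem.two_smul_sub_one_mul_self {K R : Type*} [CommRing K] [Ring R]
    [Algebra K R] {P : R} (hP : IsIdempotentElem P) :
    ((2 : K) • P - 1) * ((2 : K) • P - 1) = 1 := by
  simp only [sub_mul, mul_sub, smul_mul_smul, one_mul, mul_one, hP.eq]
  module

section Field

variable {K m n p : Type*} [Field K] [Fintype m] [DecidableEq m] [Fintype n] [DecidableEq n]
  [Fintype p] [DecidableEq p]

theorem Matrix.inv_smul_one_add_smul_of_isIdempotentElem {P : Matrix m m K}
    (hP : IsIdempotentElem P) {a b : K} (ha : a ≠ 0) (hab : a + b ≠ 0) :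
    (a • 1 + b • P)⁻¹ = a⁻¹ • 1 + (-b / (a * (a + b))) • P := by
  refine inv_eq_right_inv ?_
  rw [hP.smul_one_add_smul_mul_smul_one_add_smul]
  match_scalars
  · field_simp
  · field_simp; ring

theorem Matrix.det_smul_one_add_smul_mul_of_mul_eq_one {A : Matrix m n K} {B : Matrix n m K}
    (h : B * A = 1) {a : K} (ha : a ≠ 0) (b : K) :
    det (a • 1 + b • (A * B)) =
      a ^ ((Fintype.card m : ℤ) - Fintype.card n) * (a + b) ^ Fintype.card n := by
  have hfac : a • 1 + b • (A * B) = a • (1 + ((b / a) • A) * B) := by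
    rw [smul_add, Matrix.smul_mul, smul_smul, mul_div_cancel₀ b ha]
  have hsmall : (1 : Matrix n n K) + (b / a) • 1 = ((a + b) / a) • 1 := by
    match_scalars; field_simp
  rw [hfac, det_smul, det_one_add_mul_comm, Matrix.mul_smul, h, hsmall, det_smul, det_one,
    zpow_sub₀ ha, zpow_natCast, zpow_natCast, mul_one, div_pow]
  field_simp

theorem Matrix.det_two_smul_mul_sub_one_of_mul_eq_one {A : Matrix m n K} {B : Matrix n m K}
    (h : B * A = 1) :
    det ((2 : K) • (A * B) - 1) = (-1) ^ ((Fintype.card m : ℤ) - Fintype.card n) := by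
  rw [show (2 : K) • (A * B) - 1 = (-1 : K) • 1 + (2 : K) • (A * B) by module,
    det_smul_one_add_smul_mul_of_mul_eq_one h (neg_ne_zero.mpr one_ne_zero)]
  norm_num

theorem Matrix.det_reflection_sub_smul_reflection {A : Matrix m n K} {A' : Matrix n m K}
    {B : Matrix m p K} {B' : Matrix p m K} (hA : A' * A = 1) (hB : B' * B = 1) {u : K}
    (hu1 : u ≠ 1) (hu2 : u ≠ -1) :
    det (((2 : K) • (A * A') - 1) - u • ((2 : K) • (B * B') - 1)) =
      (1 - u) ^ ((Fintype.card m : ℤ) - (Fintype.card n + Fintype.card p)) *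
        (-1) ^ ((Fintype.card m : ℤ) - Fintype.card n) *
        (1 + u) ^ ((Fintype.card p : ℤ) - Fintype.card n) *
        det ((1 + u) ^ 2 • (1 : Matrix n n K) - (4 * u) • (A' * B * (B' * A))) := by
  have hc : u - 1 ≠ 0 := sub_ne_zero.mpr hu1
  have hc' : 1 - u ≠ 0 := sub_ne_zero.mpr hu1.symm
  have hw : 1 + u ≠ 0 := fun h => hu2 (by linear_combination h)
  set S : Matrix m m K := (u - 1) • 1 + (-2 * u) • (B * B')
  have hM : ((2 : K) • (A * A') - 1) - u • ((2 : K) • (B * B') - 1) =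
      S + A * ((2 : K) • A') := by
    rw [Matrix.mul_smul]; module
  have hQ := isIdempotentElem_mul_of_mul_eq_one hB
  have hS' : u - 1 + -2 * u = -(1 + u) := by ring
  have hS : u - 1 + -2 * u ≠ 0 := hS' ▸ neg_ne_zero.mpr hw
  have hdetS : det S =
      (u - 1) ^ ((Fintype.card m : ℤ) - Fintype.card p) * (-(1 + u)) ^ Fintype.card p := by
    rw [det_smul_one_add_smul_mul_of_mul_eq_one hB hc, hS']
  have hSinv : S⁻¹ = (u - 1)⁻¹ • 1 + (2 * u / ((u - 1) * (-(1 + u)))) • (B * B') := by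
    rw [inv_smul_one_add_smul_of_isIdempotentElem hQ hc hS, hS', neg_mul, neg_neg]
  have hcompress : 1 + (2 : K) • A' * S⁻¹ * A =
      ((u - 1) * (1 + u))⁻¹ •
        ((1 + u) ^ 2 • (1 : Matrix n n K) - (4 * u) • (A' * B * (B' * A))) := by
    rw [hSinv]
    simp only [Matrix.add_mul, Matrix.mul_add, Matrix.smul_mul, Matrix.mul_smul,
        Matrix.mul_one, smul_smul, Matrix.mul_assoc, hA, smul_sub]
    match_scalars
    · field_simp; ring
    · field_simp; ring
  have hSunit : IsUnit S.det := by
    rw [hdetS]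
    exact (mul_ne_zero (zpow_ne_zero _ hc) (pow_ne_zero _ (neg_ne_zero.mpr hw))).isUnit
  rw [hM, det_add_mul _ _ hSunit, hcompress, det_smul, hdetS]
  have h1 : (-1 : K) ≠ 0 := neg_ne_zero.mpr one_ne_zero
  rw [show u - 1 = -1 * (1 - u) by ring, mul_zpow, neg_pow (1 + u)]
  simp only [zpow_sub₀ hc', zpow_sub₀ hw, zpow_sub₀ h1, zpow_add₀ hc', zpow_natCast, mul_inv,
    inv_pow, mul_pow]
  field_simp

end Field

/-- Key lemma (Theorem 3.1, second equality): for isometries `A` (N×s) and `B` (N×t),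
with `U = (2 B Bᴴ - I)(2 A Aᴴ - I)`, the determinant `det(I - u U)` factors as
`(1-u)^(N-(s+t)) (1+u)^(t-s) det((1+u)² I_s - 4u Aᴴ B Bᴴ A)`. -/
theorem staggered_key_lemma_second
    (N s t : ℕ) (A : Matrix (Fin N) (Fin s) ℂ) (B : Matrix (Fin N) (Fin t) ℂ)
    (hA : Aᴴ * A = 1) (hB : Bᴴ * B = 1) (u : ℂ) (hu1 : u ≠ 1) (hu2 : u ≠ -1) :
    det ((1 : Matrix (Fin N) (Fin N) ℂ) -
        u • (((2 : ℂ) • (B * Bᴴ) - 1) * ((2 : ℂ) • (A * Aᴴ) - 1)))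
      = (1 - u) ^ ((N : ℤ) - ((s : ℤ) + (t : ℤ))) * (1 + u) ^ ((t : ℤ) - (s : ℤ)) *
        det ((1 + u) ^ 2 • (1 : Matrix (Fin s) (Fin s) ℂ) -
          (4 * u) • (Aᴴ * B * (Bᴴ * A))) := by
  set UA : Matrix (Fin N) (Fin N) ℂ := (2 : ℂ) • (A * Aᴴ) - 1
  have hUA : UA * UA = 1 := (isIdempotentElem_mul_of_mul_eq_one hA).two_smul_sub_one_mul_self
  have hfactor : 1 - u • (((2 : ℂ) • (B * Bᴴ) - 1) * UA) =
      (UA - u • ((2 : ℂ) • (B * Bᴴ) - 1)) * UA := by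
    rw [sub_mul UA, Matrix.smul_mul, hUA]
  have hsign : (-1 : ℂ) ^ ((N : ℤ) - s) * (-1) ^ ((N : ℤ) - s) = 1 := by
    rw [← mul_zpow]; norm_num
  rw [hfactor, det_mul, det_reflection_sub_smul_reflection hA hB hu1 hu2,
    det_two_smul_mul_sub_one_of_mul_eq_one hA]
  simp only [Fintype.card_fin]
  linear_combination (1 - u) ^ ((N : ℤ) - ((s : ℤ) + (t : ℤ))) * (1 + u) ^ ((t : ℤ) - (s : ℤ)) *
    det ((1 + u) ^ 2 • (1 : Matrix (Fin s) (Fin s) ℂ) - (4 * u) • (Aᴴ * B * (Bᴴ * A))) * hsign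
end

section
/- Let A be an N×s complex matrix and B an N×t complex matrix with A*A = I_s and B*B = I_t, and put U = (2·B·B* − I_N)·(2·A·A* − I_N). If N ≥ s + t, then (X − 1)^(N−s−t) divides the characteristic polynomial det(X·I_N − U) in ℂ[X]; in particular, when N > s + t, 1 is an eigenvalue of U of algebraic multiplicity at least N − s − t. -/
open Matrix Polynomial

/-!
`U - 1 = U_B (U_A - U_B)` because the reflection `U_B` is an involution, and
`U_A - U_B = 2 (A Aᴴ - B Bᴴ)` factors through `ℂ^(s + t)`. A matrix `μ + P Q` with `P` of
size `N × m` has `(X - μ)^(N - m)` dividing its characteristic polynomial, since `P Q` and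
`Q P` have the same characteristic polynomial up to a power of `X`.
-/

theorem IsIdempotentElem.two_smul_sub_one_mul_self_s6 {R A : Type*} [Semiring R] [Ring A]
    [Module R A] {p : A} (hp : IsIdempotentElem p) :
    ((2 : R) • p - 1) * ((2 : R) • p - 1) = 1 := by
  simp only [two_smul, sub_mul, mul_sub, add_mul, mul_add, mul_one, one_mul, hp.eq]
  abel

namespace Matrix

variable {n m R : Type*} [Fintype n] [Fintype m]

theorem isIdempotentElem_mul_conjTranspose [DecidableEq m] [Semiring R] [Star R]
    {A : Matrix n m R} (hA : Aᴴ * A = 1) : IsIdempotentElem (A * Aᴴ) := by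
  rw [IsIdempotentElem, Matrix.mul_assoc, ← Matrix.mul_assoc Aᴴ, hA, Matrix.one_mul]

theorem X_sub_C_pow_dvd_charpoly_of_sub_scalar_eq_mul [DecidableEq n] [DecidableEq m]
    [CommRing R] {M : Matrix n n R} {μ : R} (P : Matrix n m R) (Q : Matrix m n R)
    (hPQ : M - scalar n μ = P * Q) :
    (X - C μ) ^ (Fintype.card n - Fintype.card m) ∣ M.charpoly := by
  rw [X_sub_C_pow_dvd_iff, ← charpoly_sub_scalar, hPQ]
  rcases le_or_gt (Fintype.card m) (Fintype.card n) with h | h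
  · rw [charpoly_mul_comm_of_le P Q h]
    exact dvd_mul_right _ _
  · rw [Nat.sub_eq_zero_of_le h.le, pow_zero]
    exact one_dvd _

end Matrix

theorem one_is_eigenvalue_of_multiplicity_general
    (N s t : ℕ) (A : Matrix (Fin N) (Fin s) ℂ) (B : Matrix (Fin N) (Fin t) ℂ)
    (hB : Bᴴ * B = 1) :
    ((X - 1) ^ (N - s - t) ∣
        (((2 : ℂ) • (B * Bᴴ) - 1) * ((2 : ℂ) • (A * Aᴴ) - 1)).charpoly) ∧
      (s + t < N →
        N - s - t ≤
          ((((2 : ℂ) • (B * Bᴴ) - 1) * ((2 : ℂ) • (A * Aᴴ) - 1)).charpoly).rootMultiplicity 1) := by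
  set UB : Matrix (Fin N) (Fin N) ℂ := (2 : ℂ) • (B * Bᴴ) - 1
  set UA : Matrix (Fin N) (Fin N) ℂ := (2 : ℂ) • (A * Aᴴ) - 1
  have hUB : UB * UB = 1 := (isIdempotentElem_mul_conjTranspose hB).two_smul_sub_one_mul_self_s6
  have hfactor : UB * UA - scalar (Fin N) (1 : ℂ) =
      (UB * fromCols A B) * fromRows ((2 : ℂ) • Aᴴ) (-(2 : ℂ) • Bᴴ) := by
    rw [Matrix.mul_assoc, fromCols_mul_fromRows, map_one, ← hUB, ← Matrix.mul_sub]
    congr 1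
    rw [Matrix.mul_smul, Matrix.mul_smul, neg_smul, sub_sub_sub_cancel_right, sub_eq_add_neg]
  have hdvd := X_sub_C_pow_dvd_charpoly_of_sub_scalar_eq_mul _ _ hfactor
  rw [Fintype.card_fin, Fintype.card_sum, Fintype.card_fin, Fintype.card_fin, ← Nat.sub_sub,
    map_one] at hdvd
  exact ⟨hdvd, fun _ => (le_rootMultiplicity_iff (charpoly_monic _).ne_zero).2 hdvd⟩

/-- If `N ≥ s + t`, then `(X - 1)^(N - s - t)` divides the characteristic polynomial of
`U = (2 B Bᴴ - I)(2 A Aᴴ - I)`; in particular, when `N > s + t`, the eigenvalue `1` of `U`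
has algebraic multiplicity at least `N - s - t`. -/
theorem one_is_eigenvalue_of_multiplicity
    (N s t : ℕ) (A : Matrix (Fin N) (Fin s) ℂ) (B : Matrix (Fin N) (Fin t) ℂ)
    (hA : Aᴴ * A = 1) (hB : Bᴴ * B = 1) (hN : s + t ≤ N) :
    ((X - 1) ^ (N - s - t) ∣
        (((2 : ℂ) • (B * Bᴴ) - 1) * ((2 : ℂ) • (A * Aᴴ) - 1)).charpoly) ∧
      (s + t < N →
        N - s - t ≤
          ((((2 : ℂ) • (B * Bᴴ) - 1) * ((2 : ℂ) • (A * Aᴴ) - 1)).charpoly).rootMultiplicity 1) :=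
  one_is_eigenvalue_of_multiplicity_general N s t A B hB
end
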